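/- arXiv:2409.06399 — 6 statements merged into one kernel-verified Lean document; each statement's English description precedes it below -/
import Mathlib

section
/- Let (Z, M) be jointly distributed random variables. Among all measurable families of maps {T_m} such that T_M(Z) is independent of M and T_M(Z) has the same marginal distribution as Z, the family minimizing E[(T_M(Z) − Z)²] is given, for each m, by the optimal transport map T_m from the conditional law of Z given M = m to the marginal law of Z under quadratic cost. -/
/-!
Disintegrate the law of `(M, Z)` along `M`. For a jointly measurable family `S`, the variable
`S_M(Z)` is independent of `M` with law `ν` exactly when `S m` pushes the conditional law of `Z`
given `M = m` to `ν` for almost every `m`. So the admissible families are those whose sections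
are admissible for the conditional transport problems, and since the total cost
`E[(S_M(Z) - Z)²]` is the average over `m` of the conditional costs, a family that is
conditionally optimal for almost every `m` is globally optimal.
-/

open MeasureTheory ProbabilityTheory

namespace ProbabilityTheory

variable {α β Ω Ω' : Type*} {mα : MeasurableSpace α} [MeasurableSpace β] [MeasurableSpace Ω]
  [MeasurableSpace Ω']

lemma Kernel.id_prod_map_uncurry_apply (κ : Kernel β Ω) [IsSFiniteKernel κ] {S : β → Ω → Ω'}
    (hS : Measurable (Function.uncurry S)) (b : β) :
    (Kernel.id ×ₖ κ).map (Function.uncurry S) b = (κ b).map (S b) := by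
  rw [Kernel.map_apply _ hS, Kernel.prod_apply, Kernel.id_apply, Measure.dirac_prod,
    Measure.map_map hS measurable_prodMk_left]
  rfl

lemma indepFun_and_map_eq_iff_map_prodMk_eq_prod {μ : Measure α} [IsProbabilityMeasure μ]
    {X : α → β} {W : α → Ω'} (hX : Measurable X) (hW : Measurable W) (ν : Measure Ω') [SFinite ν] :
    IndepFun W X μ ∧ μ.map W = ν ↔ μ.map (fun ω ↦ (X ω, W ω)) = (μ.map X).prod ν := by
  have : IsProbabilityMeasure (μ.map X) := Measure.isProbabilityMeasure_map hX.aemeasurable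
  rw [show IndepFun W X μ ↔ IndepFun X W μ from ⟨IndepFun.symm, IndepFun.symm⟩,
    indepFun_iff_map_prod_eq_prod_map_map hX.aemeasurable hW.aemeasurable]
  refine ⟨fun ⟨h, hν⟩ ↦ hν ▸ h, fun h ↦ ?_⟩
  have hν : μ.map W = ν := by
    rw [← Measure.snd_map_prodMk hX, h, Measure.snd_prod]
  exact ⟨hν ▸ h, hν⟩

variable [StandardBorelSpace Ω] [Nonempty Ω] {μ : Measure α} [IsFiniteMeasure μ]
  {X : α → β} {Y : α → Ω}

lemma map_prodMk_uncurry_eq_compProd (hX : Measurable X) (hY : Measurable Y) {S : β → Ω → Ω'}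
    (hS : Measurable (Function.uncurry S)) :
    μ.map (fun ω ↦ (X ω, S (X ω) (Y ω))) =
      μ.map X ⊗ₘ (Kernel.id ×ₖ condDistrib Y X μ).map (Function.uncurry S) := by
  have hg : Measurable fun p : β × Ω ↦ (p.1, S p.1 p.2) := measurable_fst.prodMk hS
  rw [show (fun ω ↦ (X ω, S (X ω) (Y ω))) =
      (fun p : β × Ω ↦ (p.1, S p.1 p.2)) ∘ fun ω ↦ (X ω, Y ω) from rfl,
    ← Measure.map_map hg (hX.prodMk hY), ← compProd_map_condDistrib hY.aemeasurable]
  ext s hs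
  rw [Measure.map_apply hg hs, Measure.compProd_apply (hg hs), Measure.compProd_apply hs]
  refine lintegral_congr fun b ↦ ?_
  rw [Kernel.id_prod_map_uncurry_apply _ hS,
    Measure.map_apply hS.of_uncurry_left (measurable_prodMk_left hs)]
  rfl

lemma lintegral_eq_lintegral_condDistrib (hX : Measurable X) (hY : Measurable Y)
    {f : β × Ω → ENNReal} (hf : Measurable f) :
    ∫⁻ ω, f (X ω, Y ω) ∂μ = ∫⁻ b, ∫⁻ y, f (b, y) ∂condDistrib Y X μ b ∂μ.map X := by
  rw [← lintegral_map hf (hX.prodMk hY), ← compProd_map_condDistrib hY.aemeasurable,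
    Measure.lintegral_compProd hf]

theorem indepFun_and_map_eq_iff_ae_map_condDistrib_eq [IsProbabilityMeasure μ]
    [MeasurableSpace.CountablyGenerated Ω'] (hX : Measurable X) (hY : Measurable Y)
    {S : β → Ω → Ω'} (hS : Measurable (Function.uncurry S)) (ν : Measure Ω')
    [IsFiniteMeasure ν] :
    IndepFun (fun ω ↦ S (X ω) (Y ω)) X μ ∧ μ.map (fun ω ↦ S (X ω) (Y ω)) = ν ↔
      ∀ᵐ b ∂μ.map X, (condDistrib Y X μ b).map (S b) = ν := by
  have : IsMarkovKernel ((Kernel.id ×ₖ condDistrib Y X μ).map (Function.uncurry S)) :=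
    Kernel.IsMarkovKernel.map _ hS
  have hW : Measurable fun ω ↦ S (X ω) (Y ω) := hS.comp (hX.prodMk hY)
  rw [indepFun_and_map_eq_iff_map_prodMk_eq_prod hX hW,
    ← Measure.compProd_const, map_prodMk_uncurry_eq_compProd hX hY hS, Kernel.compProd_eq_iff]
  refine Filter.eventually_congr (Filter.Eventually.of_forall fun b ↦ ?_)
  rw [Kernel.id_prod_map_uncurry_apply _ hS, Kernel.const_apply]

end ProbabilityTheory

/-- Let (Z, M) be real random variables. Suppose that, for (almost)
every m, T m is the optimal transport map under quadratic cost from the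
conditional law of Z given M = m to the marginal law of Z (i.e. it pushes the
conditional law to the marginal and minimizes the conditional quadratic cost
among all such maps). Then T_M(Z) has the same marginal law as Z, T_M(Z) is
independent of M, and the family T minimizes E[(T_M(Z) − Z)²] among all
measurable families S with S_M(Z) independent of M and with the same marginal
law as Z. -/
theorem stmt_0 {α : Type*} [MeasureSpace α] [IsProbabilityMeasure (ℙ : Measure α)]
    (Z M : α → ℝ) (hZ : Measurable Z) (hM : Measurable M)
    (T : ℝ → ℝ → ℝ) (hT : Measurable (Function.uncurry T))
    (hTpush : ∀ᵐ m ∂(Measure.map M ℙ),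
      (condDistrib Z M ℙ m).map (T m) = Measure.map Z ℙ)
    (hTopt : ∀ᵐ m ∂(Measure.map M ℙ), ∀ g : ℝ → ℝ, Measurable g →
      (condDistrib Z M ℙ m).map g = Measure.map Z ℙ →
      ∫⁻ z, ENNReal.ofReal ((T m z - z) ^ 2) ∂(condDistrib Z M ℙ m)
        ≤ ∫⁻ z, ENNReal.ofReal ((g z - z) ^ 2) ∂(condDistrib Z M ℙ m)) :
    Measure.map (fun ω => T (M ω) (Z ω)) ℙ = Measure.map Z ℙ ∧
    IndepFun (fun ω => T (M ω) (Z ω)) M ℙ ∧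
    (∀ S : ℝ → ℝ → ℝ, Measurable (Function.uncurry S) →
      Measure.map (fun ω => S (M ω) (Z ω)) ℙ = Measure.map Z ℙ →
      IndepFun (fun ω => S (M ω) (Z ω)) M ℙ →
      ∫⁻ ω, ENNReal.ofReal ((T (M ω) (Z ω) - Z ω) ^ 2) ∂ℙ
        ≤ ∫⁻ ω, ENNReal.ofReal ((S (M ω) (Z ω) - Z ω) ^ 2) ∂ℙ) := by
  have : IsProbabilityMeasure (Measure.map Z ℙ) :=
    Measure.isProbabilityMeasure_map hZ.aemeasurable
  obtain ⟨hTindep, hTlaw⟩ :=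
    (indepFun_and_map_eq_iff_ae_map_condDistrib_eq hM hZ hT _).mpr hTpush
  refine ⟨hTlaw, hTindep, fun S hS hSlaw hSindep ↦ ?_⟩
  have hSpush := (indepFun_and_map_eq_iff_ae_map_condDistrib_eq hM hZ hS _).mp ⟨hSindep, hSlaw⟩
  have hcost : ∀ W : ℝ → ℝ → ℝ, Measurable (Function.uncurry W) →
      ∫⁻ ω, ENNReal.ofReal ((W (M ω) (Z ω) - Z ω) ^ 2) ∂ℙ =
        ∫⁻ m, ∫⁻ z, ENNReal.ofReal ((W m z - z) ^ 2) ∂condDistrib Z M ℙ m ∂Measure.map M ℙ :=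
    fun W hW ↦ lintegral_eq_lintegral_condDistrib hM hZ
      (f := fun p ↦ ENNReal.ofReal ((W p.1 p.2 - p.2) ^ 2)) (by fun_prop)
  rw [hcost T hT, hcost S hS]
  refine lintegral_mono_ae ?_
  filter_upwards [hTopt, hSpush] with m hTm hSm
  exact hTm (S m) hS.of_uncurry_left hSm
end

section
/- In the semi-parametric mixture model f = (1−λ)b + λs with known background b and unknown signal density s supported on the signal region S, the efficient score for λ is g* = (B(C)/F(S))·I_S − (1/(1−λ))·I_C, obtained as the score g = (s−b)/f minus its L²(f)-orthogonal projection onto the nuisance tangent set Λ = { h·s/f : ∫ h·s = 0, h supported on S }. -/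
/-!
Since `s > 0` on `S`, the tangent set `Λ = {h s / f}` consists of the functions `u` vanishing on
`C = Sᶜ` with `∫_S u f = 0`. Projecting the score `g` onto `Λ` therefore leaves `g = -1/(1-λ)`
on `C` and replaces `g` on `S` by its `f`-weighted mean `∫_S g f / F(S) = (1 - B(S)) / F(S) =
B(C) / F(S)`, which is exactly `g*`.
-/

open MeasureTheory

theorem mixture_score_eq_of_signal_eq_zero {lam b s f : ℝ} (hs : s = 0)
    (hf : f = (1 - lam) * b + lam * s) (hfne : f ≠ 0) :
    (s - b) / f = -(1 / (1 - lam)) := by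
  rw [hf, hs, mul_zero, add_zero] at hfne ⊢
  have hlam : 1 - lam ≠ 0 := left_ne_zero_of_mul hfne
  have hb : b ≠ 0 := right_ne_zero_of_mul hfne
  field_simp
  ring

theorem exists_eq_zero_off_mul_eq_mul {α : Type*} {S : Set α} {s u f : α → ℝ}
    (hs : ∀ x ∈ S, s x ≠ 0) (hu : ∀ x ∉ S, u x = 0) :
    ∃ h : α → ℝ, (∀ x ∉ S, h x = 0) ∧ ∀ x, h x * s x = u x * f x := by
  refine ⟨S.indicator fun x => u x * f x / s x, fun x hx => Set.indicator_of_notMem hx _,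
    fun x => ?_⟩
  by_cases hx : x ∈ S
  · rw [Set.indicator_of_mem hx, div_mul_cancel₀ _ (hs x hx)]
  · rw [Set.indicator_of_notMem hx, hu x hx, zero_mul, zero_mul]

section

variable {α : Type*} [MeasurableSpace α] {μ : Measure α} {S : Set α}

theorem integral_indicator_sub_indicator_compl_mul (hS : MeasurableSet S) (a d : ℝ)
    {φ : α → ℝ} (hφ : ∀ x ∉ S, φ x = 0) :
    ∫ x, (S.indicator (fun _ => a) x - Sᶜ.indicator (fun _ => d) x) * φ x ∂μ
      = a * ∫ x in S, φ x ∂μ := by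
  have hpt : ∀ x, (S.indicator (fun _ => a) x - Sᶜ.indicator (fun _ => d) x) * φ x
      = S.indicator (fun x => a * φ x) x := by
    intro x
    by_cases hx : x ∈ S
    · simp [hx]
    · simp [hx, hφ x hx]
  simp_rw [hpt]
  rw [integral_indicator hS, integral_const_mul]

variable {b s f : α → ℝ} {lam : ℝ}

theorem setIntegral_eq_one_sub_setIntegral_compl (hS : MeasurableSet S) (hbint : Integrable b μ)
    (hbnorm : ∫ x, b x ∂μ = 1) : ∫ x in S, b x ∂μ = 1 - ∫ x in Sᶜ, b x ∂μ := by
  linarith [integral_add_compl hS hbint]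

theorem setIntegral_mixture (hS : MeasurableSet S)
    (hf : ∀ x, f x = (1 - lam) * b x + lam * s x) (hbint : Integrable b μ)
    (hsint : Integrable s μ) (hbnorm : ∫ x, b x ∂μ = 1) (hsnorm : ∫ x in S, s x ∂μ = 1) :
    ∫ x in S, f x ∂μ = (1 - lam) * (1 - ∫ x in Sᶜ, b x ∂μ) + lam := by
  calc ∫ x in S, f x ∂μ = ∫ x in S, ((1 - lam) * b x + lam * s x) ∂μ := by simp_rw [hf]
    _ = (1 - lam) * ∫ x in S, b x ∂μ + lam * ∫ x in S, s x ∂μ := by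
      rw [integral_add (hbint.const_mul _).integrableOn (hsint.const_mul _).integrableOn,
        integral_const_mul, integral_const_mul]
    _ = (1 - lam) * (1 - ∫ x in Sᶜ, b x ∂μ) + lam := by
      rw [setIntegral_eq_one_sub_setIntegral_compl hS hbint hbnorm, hsnorm, mul_one]

theorem setIntegral_score_sub_mul_eq_zero (hS : MeasurableSet S)
    (hf : ∀ x, f x = (1 - lam) * b x + lam * s x) (hfne : ∀ x, f x ≠ 0)
    (hbint : Integrable b μ) (hsint : Integrable s μ) (hbnorm : ∫ x, b x ∂μ = 1)
    (hsnorm : ∫ x in S, s x ∂μ = 1) (hFS : ∫ x in S, f x ∂μ ≠ 0) :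
    ∫ x in S, ((s x - b x) / f x - (∫ x in Sᶜ, b x ∂μ) / ∫ x in S, f x ∂μ) * f x ∂μ = 0 := by
  set BC := ∫ x in Sᶜ, b x ∂μ
  set FS := ∫ x in S, f x ∂μ
  have hfint : Integrable f μ :=
    ((hbint.const_mul (1 - lam)).add (hsint.const_mul lam)).congr
      (Filter.Eventually.of_forall fun x => (hf x).symm)
  have hpt : ∀ x, ((s x - b x) / f x - BC / FS) * f x = s x - b x - BC / FS * f x := by
    intro x
    rw [sub_mul, div_mul_cancel₀ _ (hfne x)]
  simp_rw [hpt]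
  rw [integral_sub (f := fun x => s x - b x) (hsint.integrableOn.sub hbint.integrableOn)
      (hfint.const_mul _).integrableOn, integral_sub hsint.integrableOn hbint.integrableOn,
    integral_const_mul, hsnorm, setIntegral_eq_one_sub_setIntegral_compl hS hbint hbnorm,
    div_mul_cancel₀ _ hFS]
  ring

end

theorem stmt_5_general (S C : Set ℝ) (hS : MeasurableSet S)
    (hdisj : Disjoint S C) (hcover : S ∪ C = Set.univ)
    (b s : ℝ → ℝ) (lam : ℝ) (hlam : lam ∈ Set.Ioo (0:ℝ) 1)
    (hbint : Integrable b) (hbnorm : ∫ x, b x = 1)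
    (hsC : ∀ x ∈ C, s x = 0) (hsint : Integrable s) (hsnorm : ∫ x in S, s x = 1)
    (hspos : ∀ x ∈ S, 0 < s x)
    (f : ℝ → ℝ) (hf : ∀ x, f x = (1 - lam) * b x + lam * s x)
    (hfpos : ∀ x, 0 < f x)
    (BC FS : ℝ) (hBC : BC = ∫ x in C, b x) (hFS : FS = ∫ x in S, f x)
    (hBC1 : BC < 1)
    (g gstar : ℝ → ℝ)
    (hg : ∀ x, g x = (s x - b x) / f x)
    (hgstar : ∀ x, gstar x = Set.indicator S (fun _ => BC / FS) x
        - Set.indicator C (fun _ => 1 / (1 - lam)) x) :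
    (∃ h : ℝ → ℝ, (∀ x ∈ C, h x = 0) ∧ (∫ x in S, h x * s x = 0) ∧
      ∀ x, g x - gstar x = h x * s x / f x) ∧
    (∀ h : ℝ → ℝ, (∀ x ∈ C, h x = 0) → IntegrableOn (fun x => h x * s x) S →
      (∫ x in S, h x * s x = 0) →
      ∫ x, gstar x * (h x * s x / f x) * f x = 0) := by
  obtain rfl : Sᶜ = C := (IsCompl.of_eq hdisj.eq_bot hcover).compl_eq
  obtain ⟨hlam0, hlam1⟩ := hlam
  have hfne : ∀ x, f x ≠ 0 := fun x => (hfpos x).ne'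
  have hFSpos : 0 < FS := by
    rw [hFS, setIntegral_mixture hS hf hbint hsint hbnorm hsnorm, ← hBC]
    nlinarith
  refine ⟨?_, fun h _ _ hh0 => ?_⟩
  · have hoff : ∀ x ∉ S, g x - gstar x = 0 := fun x hx => by
      simp [hg, hgstar, hx, mixture_score_eq_of_signal_eq_zero (hsC x hx) (hf x) (hfne x)]
    obtain ⟨h, hhS, hhs⟩ :=
      exists_eq_zero_off_mul_eq_mul (f := f) (fun x hx => (hspos x hx).ne') hoff
    refine ⟨h, hhS, ?_, fun x => by rw [hhs, mul_div_cancel_right₀ _ (hfne x)]⟩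
    have hon : ∀ x ∈ S, (g x - gstar x) * f x = ((s x - b x) / f x - BC / FS) * f x := by
      intro x hx
      simp [hg, hgstar, hx]
    rw [setIntegral_congr_fun hS fun x _ => hhs x, setIntegral_congr_fun hS hon, hBC, hFS]
    exact setIntegral_score_sub_mul_eq_zero hS hf hfne hbint hsint hbnorm hsnorm
      (hFS ▸ hFSpos.ne')
  · calc ∫ x, gstar x * (h x * s x / f x) * f x = ∫ x, gstar x * (h x * s x) := by
          simp_rw [mul_assoc, div_mul_cancel₀ _ (hfne _)]
      _ = BC / FS * ∫ x in S, h x * s x := by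
          simp_rw [hgstar]
          exact integral_indicator_sub_indicator_compl_mul hS _ _ fun x hx => by
            rw [hsC x hx, mul_zero]
      _ = 0 := by rw [hh0, mul_zero]

/-- In the semi-parametric mixture f = (1−λ)b + λs with known
background b and unknown signal s supported on the signal region S, the efficient
score for λ is g* = (B(C)/F(S))·I_S − (1/(1−λ))·I_C: it differs from the score
g = (s−b)/f by an element h·s/f of the nuisance tangent set Λ (h supported on S
with ∫ h·s = 0), and g* is L²(f)-orthogonal to every element of Λ. -/
theorem stmt_5 (S C : Set ℝ) (hS : MeasurableSet S) (hC : MeasurableSet C)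
    (hdisj : Disjoint S C) (hcover : S ∪ C = Set.univ)
    (b s : ℝ → ℝ) (lam : ℝ) (hlam : lam ∈ Set.Ioo (0:ℝ) 1)
    (hbint : Integrable b) (hbnorm : ∫ x, b x = 1)
    (hsC : ∀ x ∈ C, s x = 0) (hsint : Integrable s) (hsnorm : ∫ x in S, s x = 1)
    (hspos : ∀ x ∈ S, 0 < s x)
    (f : ℝ → ℝ) (hf : ∀ x, f x = (1 - lam) * b x + lam * s x)
    (hfpos : ∀ x, 0 < f x)
    (BC FS : ℝ) (hBC : BC = ∫ x in C, b x) (hFS : FS = ∫ x in S, f x)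
    (hBC0 : 0 < BC) (hBC1 : BC < 1)
    (g gstar : ℝ → ℝ)
    (hg : ∀ x, g x = (s x - b x) / f x)
    (hgstar : ∀ x, gstar x = Set.indicator S (fun _ => BC / FS) x
        - Set.indicator C (fun _ => 1 / (1 - lam)) x) :
    (∃ h : ℝ → ℝ, (∀ x ∈ C, h x = 0) ∧ (∫ x in S, h x * s x = 0) ∧
      ∀ x, g x - gstar x = h x * s x / f x) ∧
    (∀ h : ℝ → ℝ, (∀ x ∈ C, h x = 0) → IntegrableOn (fun x => h x * s x) S →
      (∫ x in S, h x * s x = 0) →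
      ∫ x, gstar x * (h x * s x / f x) * f x = 0) :=
  stmt_5_general S C hS hdisj hcover b s lam hlam hbint hbnorm hsC hsint hsnorm hspos f hf hfpos BC
    FS hBC hFS hBC1 g gstar hg hgstar
end

section
/- In the mixture model f = (1−λ)b + λs with known background, the efficient influence function ψ(x) = (1−λ)·I(x∈S) − (F(S)/B(C))·I(x∈C) has mean zero under f and variance ∫ ψ² f = (1−λ)·F(S)/B(C). -/
open MeasureTheory

/-- In the mixture f = (1−λ)b + λs with known background, the
efficient influence function ψ = (1−λ)·I_S − (F(S)/B(C))·I_C has mean zero under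
f and variance ∫ ψ² f = (1−λ)·F(S)/B(C). -/
theorem stmt_6 (S C : Set ℝ) (hS : MeasurableSet S) (hC : MeasurableSet C)
    (hdisj : Disjoint S C) (hcover : S ∪ C = Set.univ)
    (b s : ℝ → ℝ) (lam : ℝ) (hlam : lam ∈ Set.Ico (0:ℝ) 1)
    (hbint : Integrable b) (hbnorm : ∫ x, b x = 1)
    (hsC : ∀ x ∈ C, s x = 0) (hsint : Integrable s) (hsnorm : ∫ x in S, s x = 1)
    (f : ℝ → ℝ) (hf : ∀ x, f x = (1 - lam) * b x + lam * s x)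
    (BC FS : ℝ) (hBC : BC = ∫ x in C, b x) (hFS : FS = ∫ x in S, f x)
    (hBC0 : 0 < BC) (hBC1 : BC < 1)
    (ψ : ℝ → ℝ)
    (hψ : ∀ x, ψ x = (1 - lam) * Set.indicator S (fun _ => (1:ℝ)) x
        - (FS / BC) * Set.indicator C (fun _ => (1:ℝ)) x) :
    (∫ x, ψ x * f x = 0) ∧ (∫ x, (ψ x) ^ 2 * f x = (1 - lam) * FS / BC) := by
  have hCc : C = Sᶜ := by
    apply Set.eq_of_subset_of_subset
    · exact fun x hx => fun hxS => hdisj.le_bot ⟨hxS, hx⟩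
    · intro x hx
      rcases (hcover ▸ Set.mem_univ x : x ∈ S ∪ C) with h | h
      · exact absurd h hx
      · exact h
  have hfeq : f = fun x => (1 - lam) * b x + lam * s x := funext hf
  have hfint : Integrable f := by
    rw [hfeq]; exact (hbint.const_mul _).add (hsint.const_mul _)
  -- ∫ x in C, s x = 0
  have hsC0 : ∫ x in C, s x = 0 :=
    setIntegral_eq_zero_of_forall_eq_zero hsC
  -- ∫ x in C, f x = (1-lam)*BC
  have hfC : ∫ x in C, f x = (1 - lam) * BC := by
    rw [hfeq]
    rw [integral_add ((hbint.const_mul _).restrict) ((hsint.const_mul _).restrict),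
      integral_const_mul, integral_const_mul, hsC0, hBC]
    ring
  -- ∫ s = 1
  have hsfull : ∫ x, s x = 1 := by
    rw [← integral_add_compl hS hsint, ← hCc, hsnorm, hsC0, add_zero]
  have hffull : ∫ x, f x = 1 := by
    rw [hfeq, integral_add (hbint.const_mul _) (hsint.const_mul _),
      integral_const_mul, integral_const_mul, hbnorm, hsfull]
    ring
  have hsum : FS + (1 - lam) * BC = 1 := by
    rw [hFS, ← hfC, ← hffull, ← integral_add_compl hS hfint, ← hCc]
  have hBCne : BC ≠ 0 := ne_of_gt hBC0
  -- pointwise rewrites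
  have hpt1 : (fun x => ψ x * f x)
      = fun x => (1 - lam) * S.indicator f x - (FS / BC) * C.indicator f x := by
    funext x
    rw [hψ x]
    rcases (hcover ▸ Set.mem_univ x : x ∈ S ∪ C) with h | h
    · have hnC : x ∉ C := fun hc => hdisj.le_bot ⟨h, hc⟩
      simp [Set.indicator_of_mem h, Set.indicator_of_notMem hnC]
    · have hnS : x ∉ S := fun hs' => hdisj.le_bot ⟨hs', h⟩
      simp [Set.indicator_of_mem h, Set.indicator_of_notMem hnS]
      try ring
  have hpt2 : (fun x => (ψ x) ^ 2 * f x)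
      = fun x => (1 - lam) ^ 2 * S.indicator f x + (FS / BC) ^ 2 * C.indicator f x := by
    funext x
    rw [hψ x]
    rcases (hcover ▸ Set.mem_univ x : x ∈ S ∪ C) with h | h
    · have hnC : x ∉ C := fun hc => hdisj.le_bot ⟨h, hc⟩
      simp [Set.indicator_of_mem h, Set.indicator_of_notMem hnC]
      try ring
    · have hnS : x ∉ S := fun hs' => hdisj.le_bot ⟨hs', h⟩
      simp [Set.indicator_of_mem h, Set.indicator_of_notMem hnS]
      try ring
  have hintS : Integrable (S.indicator f) := hfint.indicator hS
  have hintC : Integrable (C.indicator f) := hfint.indicator hC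
  constructor
  · rw [hpt1, integral_sub ((hintS.const_mul _)) ((hintC.const_mul _)),
      integral_const_mul, integral_const_mul, integral_indicator hS,
      integral_indicator hC, ← hFS, hfC]
    field_simp
    ring
  · rw [hpt2, integral_add ((hintS.const_mul _)) ((hintC.const_mul _)),
      integral_const_mul, integral_const_mul, integral_indicator hS,
      integral_indicator hC, ← hFS, hfC]
    have hFS1 : FS = 1 - (1 - lam) * BC := by linarith
    rw [hFS1]
    field_simp
    ring
end

section
/- For the censored maximum likelihood problem with parametric background b_γ, the first-order optimality condition in λ implies that the censored MLE signal strength satisfies λ*(F_n) = 1 − F_n(C)/B_{γ*(F_n)}(C), i.e., the estimated signal strength equals one minus the ratio of observed to expected (under the fitted background) probability in the control region. -/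
/-!
At an interior maximizer the derivative in `λ` of the censored log-likelihood vanishes. The
signal-region term contributes `n_S B(C) / ((1 - λ) B(S) + λ)` and each control observation
contributes `-1 / (1 - λ)`. Since `(1 - λ) B(S) + λ = 1 - (1 - λ) B(C)` and `n_S + n_C = n`,
the stationarity equation collapses to `n B(C) (1 - λ) = n_C`.
-/

open Real Set

theorem sum_indicator_one_add_sum_indicator_one {ι α : Type*} [Fintype ι] {S C : Set α}
    (hdisj : Disjoint S C) (x : ι → α) (hcover : ∀ i, x i ∈ S ∪ C) :
    ∑ i, S.indicator (fun _ => (1 : ℝ)) (x i) + ∑ i, C.indicator (fun _ => (1 : ℝ)) (x i)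
      = Fintype.card ι := by
  rw [← Finset.sum_add_distrib, ← Finset.card_univ, Finset.cast_card]
  refine Finset.sum_congr rfl fun i _ => ?_
  rw [← indicator_union_of_notMem_inter fun h => hdisj.notMem_of_mem_left h.1 h.2,
    indicator_of_mem (hcover i)]

theorem hasDerivAt_log_one_sub_mul {c l : ℝ} (hc : c ≠ 0) (hl : l ≠ 1) :
    HasDerivAt (fun l => log ((1 - l) * c)) (-(1 - l)⁻¹) l := by
  have h1l : 1 - l ≠ 0 := sub_ne_zero.2 hl.symm
  convert (((hasDerivAt_id' l).const_sub 1).mul_const c).log (mul_ne_zero h1l hc) using 1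
  field_simp

theorem hasDerivAt_sum_indicator_log_one_sub_mul {ι α : Type*} [Fintype ι] {x : ι → α}
    {C : Set α} {b : ι → ℝ} (hb : ∀ i, x i ∈ C → b i ≠ 0) {l : ℝ} (hl : l ≠ 1) :
    HasDerivAt (fun l => ∑ i, C.indicator (fun _ => log ((1 - l) * b i)) (x i))
      (-(∑ i, C.indicator (fun _ => (1 : ℝ)) (x i)) / (1 - l)) l := by
  have hterm : ∀ i, HasDerivAt (fun l => C.indicator (fun _ => log ((1 - l) * b i)) (x i))
      (C.indicator (fun _ => -(1 - l)⁻¹) (x i)) l := by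
    intro i
    by_cases h : x i ∈ C
    · simpa only [indicator_of_mem h] using hasDerivAt_log_one_sub_mul (hb i h) hl
    · simpa only [indicator_of_notMem h] using hasDerivAt_const l (0 : ℝ)
  refine (HasDerivAt.fun_sum fun i _ => hterm i).congr_deriv ?_
  rw [neg_div, Finset.sum_div, ← Finset.sum_neg_distrib]
  refine Finset.sum_congr rfl fun i _ => ?_
  by_cases h : x i ∈ C <;> simp [h, div_eq_mul_inv]

theorem hasDerivAt_log_mixture {B l : ℝ} (h : (1 - l) * B + l ≠ 0) :
    HasDerivAt (fun l => log ((1 - l) * B + l)) ((1 - B) / ((1 - l) * B + l)) l := by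
  convert ((((hasDerivAt_id' l).const_sub 1).mul_const B).fun_add (hasDerivAt_id' l)).log h
    using 2
  ring

theorem eq_one_sub_div_of_stationary {nS nC n BS BC l : ℝ} (hcount : nS + nC = n)
    (hB : BS + BC = 1) (hn : n ≠ 0) (hBC : BC ≠ 0) (hl : l ≠ 1) (hmix : (1 - l) * BS + l ≠ 0)
    (hstat : nS * (BC / ((1 - l) * BS + l)) + -nC / (1 - l) = 0) :
    l = 1 - nC / n / BC := by
  have h1l : 1 - l ≠ 0 := sub_ne_zero.2 hl.symm
  have hbalance : n * BC * (1 - l) = nC := by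
    field_simp at hstat
    linear_combination hstat - BC * (1 - l) * hcount + nC * (1 - l) * hB
  field_simp
  linear_combination -hbalance

/-- For the censored maximum likelihood with parametric background,
the first-order optimality condition in λ implies that an interior maximizer λ*
of the censored log-likelihood (at the fitted background b_{γ*}) satisfies
λ* = 1 − F_n(C)/B_{γ*}(C). -/
theorem stmt_8 (n : ℕ) (hn : 0 < n) (M : Fin n → ℝ) (S C : Set ℝ)
    (hdisj : Disjoint S C) (hcover : ∀ i, M i ∈ S ∪ C)
    (bg : ℝ → ℝ) (BS BC : ℝ) (hBSBC : BS + BC = 1) (hBC0 : 0 < BC) (hBC1 : BC < 1)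
    (hbg : ∀ i, M i ∈ C → 0 < bg (M i))
    (nS nC FnC : ℝ)
    (hnS : nS = ∑ i, Set.indicator S (fun _ => (1:ℝ)) (M i))
    (hnC : nC = ∑ i, Set.indicator C (fun _ => (1:ℝ)) (M i))
    (hFnC : FnC = nC / n)
    (L : ℝ → ℝ)
    (hL : ∀ l, L l = nS * Real.log ((1 - l) * BS + l)
        + ∑ i, Set.indicator C (fun _ => Real.log ((1 - l) * bg (M i))) (M i))
    (lamStar : ℝ) (hmem : lamStar ∈ Set.Ioo (0:ℝ) 1)
    (hmax : ∀ l ∈ Set.Ioo (0:ℝ) 1, L l ≤ L lamStar) :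
    lamStar = 1 - FnC / BC := by
  obtain ⟨hl0, hl1⟩ := hmem
  have hmix : 0 < (1 - lamStar) * BS + lamStar := by nlinarith
  have hderiv : HasDerivAt L
      (nS * (BC / ((1 - lamStar) * BS + lamStar)) + -nC / (1 - lamStar)) lamStar := by
    rw [funext hL, hnC, show BC = 1 - BS by linarith]
    exact ((hasDerivAt_log_mixture hmix.ne').const_mul nS).add
      (hasDerivAt_sum_indicator_log_one_sub_mul (fun i hi => (hbg i hi).ne') hl1.ne)
  have hlocal : IsLocalMax L lamStar :=
    Filter.eventually_of_mem (isOpen_Ioo.mem_nhds ⟨hl0, hl1⟩) hmax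
  have hcount : nS + nC = n := by
    simpa [hnS, hnC] using sum_indicator_one_add_sum_indicator_one hdisj M hcover
  rw [hFnC]
  exact eq_one_sub_div_of_stationary hcount hBSBC (by positivity) hBC0.ne' hl1.ne hmix.ne'
    (hlocal.hasDerivAt_eq_zero hderiv)
end

section
/- The censored MLE for (λ, γ) in the mixture model is algorithmically equivalent to the conditional MLE: profiling out λ via λ = 1 − F_n(C)/B_γ(C) in the censored likelihood yields, up to additive constants not depending on γ, the conditional log-likelihood ∑_i I(M_i ∈ C)·log(b_γ(M_i)/B_γ(C)) subject to B_γ(Ω) = 1. Hence the two optimizations have the same background maximizer γ*. -/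
open MeasureTheory

/-- Profiling out λ via λ = 1 − F_n(C)/B_γ(C) in the censored
log-likelihood yields, up to additive constants not depending on γ, the
conditional log-likelihood ∑_{i∈C} log(b_γ(M_i)/B_γ(C)); hence the censored MLE
and the conditional MLE have the same background maximizer over the constraint
set G = {γ : B_γ(Ω) = 1}. -/
theorem stmt_9 {Θ : Type*} (n : ℕ) (M : Fin n → ℝ) (S C : Set ℝ)
    (hdisj : Disjoint S C) (hcover : ∀ i, M i ∈ S ∪ C)
    (G : Set Θ) (Bc : Θ → ℝ) (bg : Θ → ℝ → ℝ)
    (hBc : ∀ γ ∈ G, 0 < Bc γ)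
    (hbg : ∀ γ ∈ G, ∀ i, M i ∈ C → 0 < bg γ (M i))
    (nS nC FnC : ℝ)
    (hnS : nS = ∑ i, Set.indicator S (fun _ => (1:ℝ)) (M i))
    (hnC : nC = ∑ i, Set.indicator C (fun _ => (1:ℝ)) (M i))
    (hFnC : FnC = nC / n) (hFnC0 : 0 < FnC) (hFnC1 : FnC < 1)
    (Lcens : Θ → ℝ → ℝ)
    (hLcens : ∀ γ l, Lcens γ l = nS * Real.log ((1 - l) * (1 - Bc γ) + l)
        + ∑ i, Set.indicator C (fun _ => Real.log ((1 - l) * bg γ (M i))) (M i))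
    (Lcond : Θ → ℝ)
    (hLcond : ∀ γ, Lcond γ
        = ∑ i, Set.indicator C (fun _ => Real.log (bg γ (M i) / Bc γ)) (M i)) :
    (∀ γ ∈ G, Lcens γ (1 - FnC / Bc γ)
        = Lcond γ + nS * Real.log (1 - FnC) + nC * Real.log FnC) ∧
    (∀ γstar ∈ G,
      ((∀ γ ∈ G, Lcond γ ≤ Lcond γstar) ↔
        (∀ γ ∈ G, Lcens γ (1 - FnC / Bc γ) ≤ Lcens γstar (1 - FnC / Bc γstar)))) := by

  have key : ∀ γ ∈ G, Lcens γ (1 - FnC / Bc γ)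
      = Lcond γ + nS * Real.log (1 - FnC) + nC * Real.log FnC := by
    intro γ hγ
    have hB := hBc γ hγ
    have harg : (1 - (1 - FnC / Bc γ)) * (1 - Bc γ) + (1 - FnC / Bc γ) = 1 - FnC := by
      field_simp
      ring
    have hsum : ∀ i : Fin n,
        Set.indicator C (fun _ => Real.log ((1 - (1 - FnC / Bc γ)) * bg γ (M i))) (M i)
        = Set.indicator C (fun _ => Real.log (bg γ (M i) / Bc γ)) (M i)
          + Set.indicator C (fun _ => (1:ℝ)) (M i) * Real.log FnC := by
      intro i
      by_cases h : M i ∈ C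
      · have hb := hbg γ hγ i h
        have h1 : (1 - (1 - FnC / Bc γ)) * bg γ (M i) = (bg γ (M i) / Bc γ) * FnC := by
          ring
        simp only [Set.indicator_of_mem h, h1, one_mul]
        rw [Real.log_mul (ne_of_gt (div_pos hb hB)) (ne_of_gt hFnC0)]
      · simp [Set.indicator_of_notMem h]
    rw [hLcens, hLcond, harg]
    rw [Finset.sum_congr rfl (fun i _ => hsum i), Finset.sum_add_distrib,
      ← Finset.sum_mul, ← hnC]
    ring
  refine ⟨key, fun γstar hstar => ⟨fun h γ hγ => ?_, fun h γ hγ => ?_⟩⟩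
  · have h1 := key γ hγ
    have h2 := key γstar hstar
    have := h γ hγ
    linarith
  · have h1 := key γ hγ
    have h2 := key γstar hstar
    have := h γ hγ
    linarith
end

section
/- Let B be a class of polynomial densities on Ω with ∫_Ω b̃ = 1 for all b̃ ∈ B, and let d be a divergence on B × B satisfying d(f,f) = 0, d(f,g) ≥ 0, and d(f,g) = 0 ⟹ f = g a.e. If two densities b, b̃ ∈ B have proportional restrictions to the control region C (i.e., b/B(C) = b̃/B̃(C) a.e. on C), then b = b̃ a.e. on Ω; consequently the true background b is the unique minimizer over B of d(b/B(C)·I_C, b̃/B̃(C)·I_C). -/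
open MeasureTheory Polynomial

/-! A polynomial is determined by its values on any set of positive measure, so proportionality
on the control region propagates to all of `ℝ`: `B̃(C) • b = B(C) • b̃` as polynomials.
Integrating over `Ω` and using the normalization gives `B̃(C) = B(C)`, hence `b = b̃`. -/

theorem Polynomial.eq_of_ae_restrict_eval_eq {R : Type*} [CommRing R] [IsDomain R]
    [MeasurableSpace R] {μ : Measure R} [NullSingletonClass μ] {s : Set R} (hs : μ s ≠ 0)
    {p q : R[X]} (h : ∀ᵐ x ∂μ.restrict s, p.eval x = q.eval x) : p = q := by
  refine eq_of_infinite_eval_eq p q fun hfin => hs ?_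
  have hnull : ∀ᵐ x ∂μ.restrict s, p.eval x ≠ q.eval x :=
    ae_restrict_of_ae (measure_eq_zero_iff_ae_notMem.mp (hfin.measure_zero μ))
  rw [← Measure.restrict_eq_zero, ← ae_eq_bot, ← Filter.eventually_false_iff_eq_bot]
  filter_upwards [h, hnull] with x hx hx' using hx' hx

theorem eq_of_forall_const_mul_eq_of_integral_eq {α : Type*} [MeasurableSpace α] {μ : Measure α}
    {f g : α → ℝ} {a c : ℝ} (ha : a ≠ 0) (h : ∀ x, a * f x = c * g x)
    (hint : ∫ x, f x ∂μ = ∫ x, g x ∂μ) (hne : ∫ x, f x ∂μ ≠ 0) : f = g := by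
  have hac : a = c := by
    refine mul_right_cancel₀ hne ?_
    calc a * ∫ x, f x ∂μ = ∫ x, a * f x ∂μ := (integral_const_mul a f).symm
      _ = ∫ x, c * g x ∂μ := by simp only [h]
      _ = c * ∫ x, f x ∂μ := by rw [integral_const_mul, hint]
  subst hac
  exact funext fun x => mul_left_cancel₀ ha (h x)

theorem eq_of_ae_restrict_div_eq_div {μ ν : Measure ℝ} [NullSingletonClass μ] {C : Set ℝ}
    (hC : μ C ≠ 0) {p q : ℝ[X]} {f g : ℝ → ℝ} (hf : ∀ x, f x = p.eval x)
    (hg : ∀ x, g x = q.eval x) (hfnorm : ∫ x, f x ∂ν = 1) (hgnorm : ∫ x, g x ∂ν = 1)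
    {a c : ℝ} (ha : a ≠ 0) (hc : c ≠ 0)
    (hprop : ∀ᵐ x ∂μ.restrict C, f x / a = g x / c) : f = g := by
  have hpoly : c • p = a • q := by
    refine eq_of_ae_restrict_eval_eq hC ?_
    filter_upwards [hprop] with x hx
    rw [eval_smul, eval_smul, smul_eq_mul, smul_eq_mul, ← hf, ← hg, mul_comm c, mul_comm a]
    exact (div_eq_div_iff ha hc).mp hx
  refine eq_of_forall_const_mul_eq_of_integral_eq (c := a) hc (fun x => ?_)
    (hfnorm.trans hgnorm.symm) (hfnorm ▸ one_ne_zero)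
  simpa only [hf, hg, eval_smul, smul_eq_mul] using congrArg (eval x) hpoly

theorem stmt_10_general (Ωs C : Set ℝ) (hC : MeasurableSet C)
    (hCpos : 0 < volume C)
    (pb : Polynomial ℝ) (b : ℝ → ℝ) (hb : ∀ x, b x = pb.eval x)
    (hbnorm : ∫ x in Ωs, b x = 1)
    (BC : ℝ) (hBCpos : 0 < BC)
    (qb : Polynomial ℝ) (btilde : ℝ → ℝ) (hbt : ∀ x, btilde x = qb.eval x)
    (hbtnorm : ∫ x in Ωs, btilde x = 1)
    (BtC : ℝ) (hBtCpos : 0 < BtC)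
    (hprop : ∀ᵐ x ∂(volume.restrict C), b x / BC = btilde x / BtC) :
    (∀ x, b x = btilde x) ∧
    (∀ d : (ℝ → ℝ) → (ℝ → ℝ) → ℝ,
      (∀ f, d f f = 0) → (∀ f g, 0 ≤ d f g) →
      (∀ f g, d f g = 0 → f =ᵐ[volume.restrict C] g) →
      ∀ (q2 : Polynomial ℝ) (b2 : ℝ → ℝ), (∀ x, b2 x = q2.eval x) →
        IntegrableOn b2 Ωs → (∫ x in Ωs, b2 x = 1) →
        ∀ B2C : ℝ, B2C = ∫ x in C, b2 x → 0 < B2C →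
        (d (C.indicator fun x => b x / BC) (C.indicator fun x => b x / BC) = 0 ∧
         0 ≤ d (C.indicator fun x => b x / BC) (C.indicator fun x => b2 x / B2C) ∧
         (d (C.indicator fun x => b x / BC) (C.indicator fun x => b2 x / B2C) = 0 →
            ∀ x, b x = b2 x))) := by
  refine ⟨congrFun (eq_of_ae_restrict_div_eq_div hCpos.ne' hb hbt hbnorm hbtnorm hBCpos.ne'
    hBtCpos.ne' hprop), ?_⟩
  intro d hd_self hd_nonneg hd_eq q2 b2 hb2 _ hb2norm B2C _ hB2Cpos
  refine ⟨hd_self _, hd_nonneg _ _, fun hzero => congrFun ?_⟩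
  have hprop2 : ∀ᵐ x ∂volume.restrict C, b x / BC = b2 x / B2C :=
    (indicator_ae_eq_restrict hC).symm.trans
      ((hd_eq _ _ hzero).trans (indicator_ae_eq_restrict hC))
  exact eq_of_ae_restrict_div_eq_div hCpos.ne' hb hb2 hbnorm hb2norm hBCpos.ne' hB2Cpos.ne' hprop2

/-- Within a class of polynomial densities normalized on Ω, if two
densities b and b̃ have proportional restrictions to a control region C of
positive Lebesgue measure (b/B(C) = b̃/B̃(C) a.e. on C), then b = b̃ everywhere.
Consequently, for any divergence d with d(f,f) = 0, d ≥ 0 and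
d(f,g) = 0 ⟹ f = g a.e. (on C), the true background b is the unique minimizer of
b̃ ↦ d(b/B(C)·I_C, b̃/B̃(C)·I_C) over the class. -/
theorem stmt_10 (Ωs C : Set ℝ) (hCsub : C ⊆ Ωs) (hC : MeasurableSet C)
    (hCpos : 0 < volume C)
    (pb : Polynomial ℝ) (b : ℝ → ℝ) (hb : ∀ x, b x = pb.eval x)
    (hbint : IntegrableOn b Ωs) (hbnorm : ∫ x in Ωs, b x = 1)
    (BC : ℝ) (hBC : BC = ∫ x in C, b x) (hBCpos : 0 < BC)
    (qb : Polynomial ℝ) (btilde : ℝ → ℝ) (hbt : ∀ x, btilde x = qb.eval x)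
    (hbtint : IntegrableOn btilde Ωs) (hbtnorm : ∫ x in Ωs, btilde x = 1)
    (BtC : ℝ) (hBtC : BtC = ∫ x in C, btilde x) (hBtCpos : 0 < BtC)
    (hprop : ∀ᵐ x ∂(volume.restrict C), b x / BC = btilde x / BtC) :
    (∀ x, b x = btilde x) ∧
    (∀ d : (ℝ → ℝ) → (ℝ → ℝ) → ℝ,
      (∀ f, d f f = 0) → (∀ f g, 0 ≤ d f g) →
      (∀ f g, d f g = 0 → f =ᵐ[volume.restrict C] g) →
      ∀ (q2 : Polynomial ℝ) (b2 : ℝ → ℝ), (∀ x, b2 x = q2.eval x) →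
        IntegrableOn b2 Ωs → (∫ x in Ωs, b2 x = 1) →
        ∀ B2C : ℝ, B2C = ∫ x in C, b2 x → 0 < B2C →
        (d (C.indicator fun x => b x / BC) (C.indicator fun x => b x / BC) = 0 ∧
         0 ≤ d (C.indicator fun x => b x / BC) (C.indicator fun x => b2 x / B2C) ∧
         (d (C.indicator fun x => b x / BC) (C.indicator fun x => b2 x / B2C) = 0 →
            ∀ x, b x = b2 x))) :=
  stmt_10_general Ωs C hC hCpos pb b hb hbnorm BC hBCpos qb btilde hbt hbtnorm BtC hBtCpos hprop
end
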